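/- arXiv:2004.07529 — 3 statements merged into one kernel-verified Lean document; each statement's English description precedes it below -/
import Mathlib

section
/- The group GL_2(ℂ) of invertible 2×2 complex matrices has exactly three z-classes, represented by the identity matrix I, the diagonal matrix diag(1,2), and the matrix [[1,1],[0,1]]. -/
open scoped Matrix

/-- Two elements are z-equivalent if their centralizers are conjugate. -/
def zEquiv {G : Type*} [Group G] (g₁ g₂ : G) : Prop :=
  ∃ t : G, (Subgroup.centralizer {g₁}).map (MulAut.conj t).toMonoidHom =
    Subgroup.centralizer {g₂}

/-- The set of z-classes of a group. -/
def zClasses (G : Type*) [Group G] : Set (Set G) :=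
  Set.range fun g => {h | zEquiv g h}

/-- The diagonal matrix `diag(1, 2)` as an element of `GL₂(ℂ)`. -/
noncomputable def gDiag : (Matrix (Fin 2) (Fin 2) ℂ)ˣ where
  val := !![1, 0; 0, 2]
  inv := !![1, 0; 0, 2⁻¹]
  val_inv := by
    rw [Matrix.mul_fin_two, Matrix.one_fin_two]
    norm_num
  inv_val := by
    rw [Matrix.mul_fin_two, Matrix.one_fin_two]
    norm_num

/-- The unipotent matrix `[[1, 1], [0, 1]]` as an element of `GL₂(ℂ)`. -/
noncomputable def gUnip : (Matrix (Fin 2) (Fin 2) ℂ)ˣ where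
  val := !![1, 1; 0, 1]
  inv := !![1, -1; 0, 1]
  val_inv := by
    rw [Matrix.mul_fin_two, Matrix.one_fin_two]
    norm_num
  inv_val := by
    rw [Matrix.mul_fin_two, Matrix.one_fin_two]
    norm_num


section ZLemmas
variable {G : Type*} [Group G]


lemma map_conj_centralizer (t g : G) :
    (Subgroup.centralizer {g}).map (MulAut.conj t).toMonoidHom =
      Subgroup.centralizer {t * g * t⁻¹} := by
  ext x
  rw [Subgroup.mem_map_equiv]
  simp only [Subgroup.mem_centralizer_iff, Set.mem_singleton_iff, forall_eq,
    MulAut.conj_symm_apply]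
  constructor
  · intro h
    have := congrArg (fun y => t * y * t⁻¹) h
    simpa [mul_assoc] using this
  · intro h
    have := congrArg (fun y => t⁻¹ * y * t) h
    simpa [mul_assoc] using this

lemma zEquiv_refl (g : G) : zEquiv g g :=
  ⟨1, by simpa using map_conj_centralizer (1:G) g⟩

lemma zEquiv_symm {g h : G} (e : zEquiv g h) : zEquiv h g := by
  obtain ⟨t, ht⟩ := e
  refine ⟨t⁻¹, ?_⟩
  rw [← ht, map_conj_centralizer, map_conj_centralizer]
  simp [mul_assoc]

lemma zEquiv_trans {a b c : G} (e1 : zEquiv a b) (e2 : zEquiv b c) : zEquiv a c := by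
  obtain ⟨t1, h1⟩ := e1
  obtain ⟨t2, h2⟩ := e2
  refine ⟨t2 * t1, ?_⟩
  rw [← h2, ← h1, map_conj_centralizer, map_conj_centralizer, map_conj_centralizer]
  congr 2
  group

lemma zEquiv_conj (g t : G) : zEquiv g (t * g * t⁻¹) := ⟨t, map_conj_centralizer t g⟩

lemma class_eq_of_zEquiv {a b : G} (e : zEquiv a b) : {x | zEquiv b x} = {x | zEquiv a x} := by
  ext x
  exact ⟨fun h => zEquiv_trans e h, fun h => zEquiv_trans (zEquiv_symm e) h⟩

end ZLemmas

local notation "M2" => Matrix (Fin 2) (Fin 2) ℂ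
local notation "G2" => (Matrix (Fin 2) (Fin 2) ℂ)ˣ


lemma mem_cen_iff (g x : G2) :
    x ∈ Subgroup.centralizer {g} ↔ (g : M2) * (x : M2) = (x : M2) * (g : M2) := by
  rw [Subgroup.mem_centralizer_iff]
  constructor
  · intro h
    have := h g rfl
    exact congrArg Units.val this
  · intro h u hu
    subst hu
    exact Units.ext h

noncomputable def toUnit (A : M2) (h : A.det ≠ 0) : G2 :=
  ((Matrix.isUnit_iff_isUnit_det A).mpr (Ne.isUnit h)).unit

@[simp] lemma toUnit_val (A : M2) (h : A.det ≠ 0) : ((toUnit A h : G2) : M2) = A :=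
  IsUnit.unit_spec _

lemma det_ne_zero (g : G2) : ((g : M2)).det ≠ 0 := by
  have := (Matrix.isUnit_iff_isUnit_det (g : M2)).mp g.isUnit
  exact this.ne_zero

lemma comm_diag_iff {a b : ℂ} (hab : a ≠ b) (B : M2) :
    !![a,0;0,b] * B = B * !![a,0;0,b] ↔ B 0 1 = 0 ∧ B 1 0 = 0 := by
  constructor
  · intro h
    have h01 := congrFun (congrFun h 0) 1
    have h10 := congrFun (congrFun h 1) 0
    simp [Matrix.mul_apply, Fin.sum_univ_two] at h01 h10
    have hab' : a - b ≠ 0 := sub_ne_zero.mpr hab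
    constructor
    · have : B 0 1 * (a - b) = 0 := by linear_combination h01
      rcases mul_eq_zero.mp this with h | h
      · exact h
      · exact absurd h hab'
    · have : B 1 0 * (b - a) = 0 := by linear_combination h10
      rcases mul_eq_zero.mp this with h | h
      · exact h
      · exact absurd h (sub_ne_zero.mpr hab.symm)
  · rintro ⟨h1, h2⟩
    ext i j
    fin_cases i <;> fin_cases j <;>
      simp [Matrix.mul_apply, Fin.sum_univ_two, h1, h2] <;> ring

lemma comm_unip_iff {a c : ℂ} (hc : c ≠ 0) (B : M2) :
    !![a,c;0,a] * B = B * !![a,c;0,a] ↔ B 1 0 = 0 ∧ B 0 0 = B 1 1 := by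
  constructor
  · intro h
    have h00 := congrFun (congrFun h 0) 0
    have h01 := congrFun (congrFun h 0) 1
    simp [Matrix.mul_apply, Fin.sum_univ_two] at h00 h01
    have hB10 : B 1 0 = 0 := by
      have : c * B 1 0 = 0 := by linear_combination h00
      rcases mul_eq_zero.mp this with h | h
      · exact absurd h hc
      · exact h
    refine ⟨hB10, ?_⟩
    have : c * (B 1 1 - B 0 0) = 0 := by linear_combination h01
    rcases mul_eq_zero.mp this with h | h
    · exact absurd h hc
    · exact (sub_eq_zero.mp h).symm
  · rintro ⟨h1, h2⟩
    ext i j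
    fin_cases i <;> fin_cases j <;>
      simp [Matrix.mul_apply, Fin.sum_univ_two, h1, h2] <;> ring
lemma cen_one_top : Subgroup.centralizer ({1} : Set G2) = ⊤ := by
  ext x; simp [mem_cen_iff]

lemma cen_scalar_top (u : G2) (a : ℂ) (hu : (u : M2) = !![a,0;0,a]) :
    Subgroup.centralizer {u} = ⊤ := by
  ext x
  simp only [Subgroup.mem_top, iff_true, mem_cen_iff, hu]
  ext i j
  fin_cases i <;> fin_cases j <;>
    simp [Matrix.mul_apply, Fin.sum_univ_two] <;> ring

lemma cen_diag (u : G2) {a b : ℂ} (hu : (u : M2) = !![a,0;0,b]) (hab : a ≠ b) :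
    Subgroup.centralizer {u} = Subgroup.centralizer {gDiag} := by
  have h2 : ((gDiag : G2) : M2) = !![(1:ℂ),0;0,2] := rfl
  ext x
  rw [mem_cen_iff, mem_cen_iff, hu, h2, comm_diag_iff hab, comm_diag_iff (by norm_num)]

lemma cen_unip (u : G2) {a c : ℂ} (hu : (u : M2) = !![a,c;0,a]) (hc : c ≠ 0) :
    Subgroup.centralizer {u} = Subgroup.centralizer {gUnip} := by
  have h2 : ((gUnip : G2) : M2) = !![(1:ℂ),1;0,1] := rfl
  ext x
  rw [mem_cen_iff, mem_cen_iff, hu, h2, comm_unip_iff hc, comm_unip_iff (by norm_num : (1:ℂ) ≠ 0)]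

lemma classify_aux (g : G2) (hq : (g : M2) 0 1 ≠ 0) :
    zEquiv gDiag g ∨ zEquiv gUnip g := by
  set p : ℂ := (g : M2) 0 0 with hp
  set q : ℂ := (g : M2) 0 1 with hqd
  set r : ℂ := (g : M2) 1 0 with hr
  set s : ℂ := (g : M2) 1 1 with hs
  have hA : (g : M2) = !![p, q; r, s] := Matrix.eta_fin_two _
  have hdet : p * s - q * r ≠ 0 := by
    have := det_ne_zero g
    rwa [hA, Matrix.det_fin_two_of] at this
  obtain ⟨d, hd⟩ : ∃ d : ℂ, d ^ 2 = (p - s) ^ 2 + 4 * q * r :=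
    IsAlgClosed.exists_pow_nat_eq ((p - s) ^ 2 + 4 * q * r) zero_lt_two
  set a : ℂ := (p + s + d) / 2 with ha
  set b : ℂ := (p + s - d) / 2 with hb
  have hab : a * b = p * s - q * r := by
    rw [ha, hb]; linear_combination (-1/4 : ℂ) * hd
  have hab0 : a * b ≠ 0 := by rw [hab]; exact hdet
  by_cases hd0 : d = 0
  · -- repeated eigenvalue: Jordan block
    right
    rw [hd0] at hd ha
    have hba : b = a := by rw [ha, hb, hd0]; ring
    have haa : a * a ≠ 0 := by rw [← hba] at hab0 ⊢; exact hab0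
    have hPdet : (!![q, 0; a - p, 1] : M2).det ≠ 0 := by
      rw [Matrix.det_fin_two_of]; simpa using hq
    have hJdet : (!![a, 1; 0, a] : M2).det ≠ 0 := by
      rw [Matrix.det_fin_two_of]; simpa using haa
    set t : G2 := toUnit _ hPdet with htd
    set J : G2 := toUnit _ hJdet with hJd
    have key : t * J = g * t := by
      apply Units.ext
      rw [Units.val_mul, Units.val_mul, htd, hJd, toUnit_val, toUnit_val, hA, ha]
      ext i j
      fin_cases i <;> fin_cases j <;>
        simp [Matrix.mul_apply, Fin.sum_univ_two]
      all_goals try ring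
      all_goals linear_combination (1/4 : ℂ) * hd
    have hg : t * J * t⁻¹ = g := by rw [mul_inv_eq_iff_eq_mul]; exact key
    refine ⟨t, ?_⟩
    rw [← cen_unip J (by rw [hJd, toUnit_val]) (one_ne_zero), map_conj_centralizer, hg]
  · -- distinct eigenvalues
    left
    have hab' : a ≠ b := by
      intro h
      apply hd0
      have h2 : a - b = d := by rw [ha, hb]; ring
      rw [h, sub_self] at h2; exact h2.symm
    have hPdet : (!![q, q; a - p, b - p] : M2).det ≠ 0 := by
      rw [Matrix.det_fin_two_of]
      have h3 : q * (b - p) - q * (a - p) = -(q * d) := by rw [ha, hb]; ring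
      rw [h3]
      exact neg_ne_zero.mpr (mul_ne_zero hq hd0)
    have hJdet : (!![a, 0; 0, b] : M2).det ≠ 0 := by
      rw [Matrix.det_fin_two_of]; simpa using hab0
    set t : G2 := toUnit _ hPdet with htd
    set J : G2 := toUnit _ hJdet with hJd
    have key : t * J = g * t := by
      apply Units.ext
      rw [Units.val_mul, Units.val_mul, htd, hJd, toUnit_val, toUnit_val, hA, ha, hb]
      ext i j
      fin_cases i <;> fin_cases j <;>
        simp [Matrix.mul_apply, Fin.sum_univ_two]
      all_goals try ring
      all_goals linear_combination (1/4 : ℂ) * hd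
    have hg : t * J * t⁻¹ = g := by rw [mul_inv_eq_iff_eq_mul]; exact key
    refine ⟨t, ?_⟩
    rw [← cen_diag J (by rw [hJd, toUnit_val]) hab', map_conj_centralizer, hg]

lemma swap_entry (g : G2) : ∃ u : G2, u * g * u⁻¹ = u * g * u ∧
    ((u * g * u : G2) : M2) 0 1 = (g : M2) 1 0 := by
  have hSdet : (!![(0:ℂ), 1; 1, 0] : M2).det ≠ 0 := by
    rw [Matrix.det_fin_two_of]; norm_num
  refine ⟨toUnit _ hSdet, ?_, ?_⟩
  · have h2 : toUnit _ hSdet * toUnit _ hSdet = 1 := by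
      apply Units.ext
      rw [Units.val_mul, toUnit_val]
      ext i j
      fin_cases i <;> fin_cases j <;>
        simp [Matrix.mul_apply, Fin.sum_univ_two, Matrix.one_apply]
    rw [inv_eq_of_mul_eq_one_right h2]
  · rw [Units.val_mul, Units.val_mul, toUnit_val]
    simp [Matrix.mul_apply, Matrix.vecMul, dotProduct, Fin.sum_univ_two]

lemma classify (g : G2) : zEquiv 1 g ∨ zEquiv gDiag g ∨ zEquiv gUnip g := by
  by_cases hq : (g : M2) 0 1 ≠ 0
  · exact Or.inr (classify_aux g hq)
  push_neg at hq
  by_cases hr : (g : M2) 1 0 ≠ 0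
  · -- swap to reduce to classify_aux
    obtain ⟨u, hu, hu2⟩ := swap_entry g
    have := classify_aux (u * g * u⁻¹) (by rw [hu]; rwa [hu2])
    have hz : zEquiv (u * g * u⁻¹) g := zEquiv_symm (zEquiv_conj g u)
    rcases this with h | h
    · exact Or.inr (Or.inl (zEquiv_trans h hz))
    · exact Or.inr (Or.inr (zEquiv_trans h hz))
  push_neg at hr
  have hA : (g : M2) = !![(g : M2) 0 0, 0; 0, (g : M2) 1 1] := by
    have h := Matrix.eta_fin_two (g : M2)
    rw [hq, hr] at h
    exact h
  by_cases hps : (g : M2) 0 0 = (g : M2) 1 1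
  · -- scalar
    left
    refine ⟨1, ?_⟩
    rw [map_conj_centralizer]
    simp only [one_mul, mul_one, inv_one]
    rw [cen_one_top, cen_scalar_top g ((g : M2) 1 1) (hps ▸ hA)]
  · -- diagonal with distinct entries
    right; left
    refine ⟨1, ?_⟩
    rw [map_conj_centralizer]
    simp only [one_mul, inv_one, mul_one]
    exact (cen_diag g hA hps).symm

lemma trace_conj (t u : G2) :
    Matrix.trace ((t * u * t⁻¹ : G2) : M2) = Matrix.trace ((u : G2) : M2) := by
  rw [Units.val_mul, Units.val_mul, Matrix.trace_mul_comm, ← Matrix.mul_assoc,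
    ← Units.val_mul, inv_mul_cancel, Units.val_one, Matrix.one_mul]

lemma det_conj (t u : G2) :
    Matrix.det ((t * u * t⁻¹ : G2) : M2) = Matrix.det ((u : G2) : M2) := by
  have h : ((t⁻¹ : G2) : M2).det * ((t : G2) : M2).det = 1 := by
    rw [← Matrix.det_mul, ← Units.val_mul, inv_mul_cancel, Units.val_one, Matrix.det_one]
  rw [Units.val_mul, Units.val_mul, Matrix.det_mul, Matrix.det_mul]
  calc ((t : G2) : M2).det * ((u : G2) : M2).det * ((t⁻¹ : G2) : M2).det
      = (((t⁻¹ : G2) : M2).det * ((t : G2) : M2).det) * ((u : G2) : M2).det := by ring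
    _ = ((u : G2) : M2).det := by rw [h, one_mul]

lemma cen_top_of_zEquiv_one (u : G2) (h : zEquiv 1 u) :
    Subgroup.centralizer {u} = ⊤ := by
  obtain ⟨t, ht⟩ := h
  rw [map_conj_centralizer] at ht
  have h1 : t * 1 * t⁻¹ = (1 : G2) := by group
  rw [h1, cen_one_top] at ht
  exact ht.symm

lemma not_z_one_diag : ¬ zEquiv (1 : G2) gDiag := by
  intro h
  have htop := cen_top_of_zEquiv_one _ h
  have hmem : gUnip ∈ Subgroup.centralizer {gDiag} := htop ▸ Subgroup.mem_top _
  rw [mem_cen_iff] at hmem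
  have h01 := congrFun (congrFun hmem 0) 1
  have e1 : ((gDiag : G2) : M2) = !![1, 0; 0, 2] := rfl
  have e2 : ((gUnip : G2) : M2) = !![1, 1; 0, 1] := rfl
  rw [e1, e2] at h01
  simp [Matrix.mul_apply, Fin.sum_univ_two] at h01

lemma not_z_one_unip : ¬ zEquiv (1 : G2) gUnip := by
  intro h
  have htop := cen_top_of_zEquiv_one _ h
  have hmem : gDiag ∈ Subgroup.centralizer {gUnip} := htop ▸ Subgroup.mem_top _
  rw [mem_cen_iff] at hmem
  have h01 := congrFun (congrFun hmem 0) 1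
  have e1 : ((gDiag : G2) : M2) = !![1, 0; 0, 2] := rfl
  have e2 : ((gUnip : G2) : M2) = !![1, 1; 0, 1] := rfl
  rw [e1, e2] at h01
  simp [Matrix.mul_apply, Fin.sum_univ_two] at h01

lemma not_z_diag_unip : ¬ zEquiv gDiag gUnip := by
  intro h
  obtain ⟨t, ht⟩ := h
  rw [map_conj_centralizer] at ht
  have hmem : t * gDiag * t⁻¹ ∈ Subgroup.centralizer {t * gDiag * t⁻¹} := by
    rw [mem_cen_iff]
  rw [ht, mem_cen_iff] at hmem
  set Mv : M2 := ((t * gDiag * t⁻¹ : G2) : M2) with hMv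
  have e2 : ((gUnip : G2) : M2) = !![1, 1; 0, 1] := rfl
  rw [e2] at hmem
  obtain ⟨h10, hdg⟩ := (comm_unip_iff (one_ne_zero) Mv).mp hmem
  have htr : Mv 0 0 + Mv 1 1 = 3 := by
    have := trace_conj t gDiag
    rw [← hMv] at this
    rw [Matrix.trace_fin_two] at this
    rw [this]
    norm_num [Matrix.trace_fin_two, show ((gDiag : G2) : M2) = !![1, 0; 0, 2] from rfl]
  have hdt : Mv 0 0 * Mv 1 1 - Mv 0 1 * Mv 1 0 = 2 := by
    have := det_conj t gDiag
    rw [← hMv] at this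
    rw [Matrix.det_fin_two] at this
    rw [this]
    norm_num [show ((gDiag : G2) : M2) = !![1, 0; 0, 2] from rfl, Matrix.det_fin_two]
  rw [hdg] at htr hdt
  rw [h10, mul_zero, sub_zero] at hdt
  have hfalse : (0 : ℂ) = 1 := by linear_combination (2 * Mv 1 1 + 3) * htr - 4 * hdt
  norm_num at hfalse

lemma class_ne_one_diag :
    ({h | zEquiv (1 : G2) h} : Set G2) ≠ {h | zEquiv gDiag h} := by
  intro he
  have : gDiag ∈ ({h | zEquiv gDiag h} : Set G2) := zEquiv_refl _
  rw [← he] at this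
  exact not_z_one_diag this

lemma class_ne_one_unip :
    ({h | zEquiv (1 : G2) h} : Set G2) ≠ {h | zEquiv gUnip h} := by
  intro he
  have : gUnip ∈ ({h | zEquiv gUnip h} : Set G2) := zEquiv_refl _
  rw [← he] at this
  exact not_z_one_unip this

lemma class_ne_diag_unip :
    ({h | zEquiv gDiag h} : Set G2) ≠ {h | zEquiv gUnip h} := by
  intro he
  have : gUnip ∈ ({h | zEquiv gUnip h} : Set G2) := zEquiv_refl _
  rw [← he] at this
  exact not_z_diag_unip this

/-- `GL₂(ℂ)` has exactly three z-classes, represented by the identity,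
`diag(1, 2)`, and `[[1, 1], [0, 1]]`. -/
theorem three_zClasses_GL2_complex :
    Nat.card (zClasses ((Matrix (Fin 2) (Fin 2) ℂ)ˣ)) = 3 ∧
    zClasses ((Matrix (Fin 2) (Fin 2) ℂ)ˣ) =
      {{h | zEquiv 1 h}, {h | zEquiv gDiag h}, {h | zEquiv gUnip h}} := by
  have hset : zClasses ((Matrix (Fin 2) (Fin 2) ℂ)ˣ) =
      {{h | zEquiv 1 h}, {h | zEquiv gDiag h}, {h | zEquiv gUnip h}} := by
    ext S
    simp only [zClasses, Set.mem_range, Set.mem_insert_iff, Set.mem_singleton_iff]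
    constructor
    · rintro ⟨g, rfl⟩
      rcases classify g with h | h | h
      · exact Or.inl (class_eq_of_zEquiv h)
      · exact Or.inr (Or.inl (class_eq_of_zEquiv h))
      · exact Or.inr (Or.inr (class_eq_of_zEquiv h))
    · rintro (rfl | rfl | rfl)
      exacts [⟨1, rfl⟩, ⟨gDiag, rfl⟩, ⟨gUnip, rfl⟩]
  refine ⟨?_, hset⟩
  rw [hset, Nat.card_coe_set_eq]
  rw [Set.ncard_insert_of_notMem (by simp [class_ne_one_diag, class_ne_one_unip])]
  rw [Set.ncard_pair class_ne_diag_unip]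
end

section
/- Let G and H be finite groups that are isoclinic, i.e., there exist a group isomorphism φ : G/Z(G) → H/Z(H) and a group isomorphism ψ : [G,G] → [H,H] such that for all g₁, g₂ ∈ G and h₁, h₂ ∈ H, if φ(g₁·Z(G)) = h₁·Z(H) and φ(g₂·Z(G)) = h₂·Z(H), then ψ([g₁,g₂]) = [h₁,h₂]. Then the number of z-classes of G equals the number of z-classes of H. -/
open scoped Matrix
open scoped commutatorElement

/-!
Write `Z = Z(G)` and `C(g)` for the centralizer of `g`. Since `Z ≤ C(g)`, two centralizers are
conjugate in `G` iff their images `C(g) / Z` are conjugate in `G / Z`; and `C(g) / Z` consists of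
the classes `x Z` with `[x, g] = 1`, a condition that an isoclinism `(φ, ψ)` preserves because `ψ`
is injective. Hence `φ` carries `C(g) / Z` to `C(h) / Z` whenever `φ (g Z) = h Z`, so any lift of
`φ` to a map `G → H` preserves and reflects z-equivalence, and it is onto up to z-equivalence
because z-equivalence only depends on the class modulo the centre.
-/

open Subgroup QuotientGroup

namespace Subgroup

variable {G H : Type*} [Group G] [Group H]

def IsConjugate (A B : Subgroup G) : Prop :=
  ∃ t : G, A.map (MulAut.conj t).toMonoidHom = B

lemma map_conj_map_conj (s t : G) (A : Subgroup G) :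
    (A.map (MulAut.conj t).toMonoidHom).map (MulAut.conj s).toMonoidHom =
      A.map (MulAut.conj (s * t)).toMonoidHom := by
  rw [map_map, map_mul, MulAut.mul_def]
  rfl

lemma map_conj_one (A : Subgroup G) : A.map (MulAut.conj (1 : G)).toMonoidHom = A := by
  rw [map_one]
  exact map_id A

lemma IsConjugate.refl (A : Subgroup G) : IsConjugate A A := ⟨1, map_conj_one A⟩

lemma IsConjugate.symm {A B : Subgroup G} : IsConjugate A B → IsConjugate B A := by
  rintro ⟨t, rfl⟩
  exact ⟨t⁻¹, by rw [map_conj_map_conj, inv_mul_cancel, map_conj_one]⟩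

lemma IsConjugate.trans {A B C : Subgroup G} :
    IsConjugate A B → IsConjugate B C → IsConjugate A C := by
  rintro ⟨t, rfl⟩ ⟨s, rfl⟩
  exact ⟨s * t, (map_conj_map_conj s t A).symm⟩

lemma map_map_conj (f : G →* H) (t : G) (A : Subgroup G) :
    (A.map (MulAut.conj t).toMonoidHom).map f = (A.map f).map (MulAut.conj (f t)).toMonoidHom := by
  rw [map_map, map_map]
  congr 1
  ext x
  simp

lemma le_map_conj_of_normal {N A : Subgroup G} [N.Normal] (hN : N ≤ A) (t : G) :
    N ≤ A.map (MulAut.conj t).toMonoidHom :=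
  (Normal.map_conj_eq N t).symm.le.trans (map_mono hN)

lemma isConjugate_map_iff (f : G →* H) (hf : Function.Surjective f) {A B : Subgroup G}
    (hA : f.ker ≤ A) (hB : f.ker ≤ B) : IsConjugate (A.map f) (B.map f) ↔ IsConjugate A B := by
  constructor
  · rintro ⟨u, hu⟩
    obtain ⟨t, rfl⟩ := hf u
    refine ⟨t, map_injective_of_ker_le f (le_map_conj_of_normal hA t) hB ?_⟩
    rw [map_map_conj, hu]
  · rintro ⟨t, rfl⟩
    exact ⟨f t, (map_map_conj f t A).symm⟩

end Subgroup

section CentralQuotient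

variable {G : Type*} [Group G]

def zSetoid (G : Type*) [Group G] : Setoid G where
  r := zEquiv
  iseqv := ⟨fun _ => IsConjugate.refl _, IsConjugate.symm, IsConjugate.trans⟩

lemma zClasses_eq_classes : zClasses G = (zSetoid G).classes := by
  have hclass (g : G) : {h | zEquiv g h} = {x | zSetoid G x g} :=
    Set.ext fun _ => ⟨IsConjugate.symm, IsConjugate.symm⟩
  ext s
  simp only [zClasses, Setoid.classes, Set.mem_range, hclass, eq_comm]
  rfl

lemma card_zClasses_eq_card_quotient :
    Nat.card (zClasses G) = Nat.card (Quotient (zSetoid G)) := by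
  rw [zClasses_eq_classes]
  exact Nat.card_congr (Setoid.quotientEquivClasses _).symm

lemma commute_iff_mk_mem_map_centralizer {x g : G} :
    Commute x g ↔ (x : G ⧸ center G) ∈ (centralizer {g}).map (mk' (center G)) := by
  change _ ↔ mk' (center G) x ∈ _
  rw [← mem_comap, comap_map_eq_self (by rw [ker_mk']; exact center_le_centralizer _),
    mem_centralizer_singleton_iff]
  exact Iff.rfl

lemma zEquiv_iff_isConjugate_map_mk {g₁ g₂ : G} :
    zEquiv g₁ g₂ ↔ ((centralizer {g₁}).map (mk' (center G))).IsConjugate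
      ((centralizer {g₂}).map (mk' (center G))) :=
  (isConjugate_map_iff _ (mk'_surjective _) (by rw [ker_mk']; exact center_le_centralizer _)
    (by rw [ker_mk']; exact center_le_centralizer _)).symm

lemma zEquiv_of_mk_eq {g₁ g₂ : G} (h : (g₁ : G ⧸ center G) = g₂) : zEquiv g₁ g₂ := by
  have hC :
      (centralizer {g₁}).map (mk' (center G)) = (centralizer {g₂}).map (mk' (center G)) := by
    ext q
    obtain ⟨x, rfl⟩ := mk_surjective q
    -- `Commute x g` is symmetric, so it depends only on the class of `g` as well.
    rw [← commute_iff_mk_mem_map_centralizer, ← commute_iff_mk_mem_map_centralizer,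
      Commute.symm_iff, commute_iff_mk_mem_map_centralizer, h,
      ← commute_iff_mk_mem_map_centralizer, Commute.symm_iff]
  rw [zEquiv_iff_isConjugate_map_mk, hC]
  exact IsConjugate.refl _

end CentralQuotient

lemma Setoid.card_quotient_eq_of_rel_iff {α β : Type*} {r : Setoid α} {s : Setoid β} (f : α → β)
    (hf : ∀ a b, r a b ↔ s (f a) (f b)) (hsurj : ∀ b, ∃ a, s (f a) b) :
    Nat.card (Quotient r) = Nat.card (Quotient s) := by
  refine Nat.card_congr (Equiv.ofBijective (Quotient.map f fun a b => (hf a b).1) ⟨?_, ?_⟩)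
  · exact Quotient.ind₂ fun a b h => Quotient.sound ((hf a b).2 (Quotient.exact h))
  · refine Quotient.ind fun b => ?_
    obtain ⟨a, ha⟩ := hsurj b
    exact ⟨⟦a⟧, Quotient.sound ha⟩

section Isoclinism

variable {G H : Type*} [Group G] [Group H]

def IsIsoclinism (φ : (G ⧸ center G) ≃* (H ⧸ center H)) (ψ : commutator G ≃* commutator H) :
    Prop :=
  ∀ (g₁ g₂ : G) (h₁ h₂ : H),
    φ (g₁ : G ⧸ center G) = (h₁ : H ⧸ center H) →
    φ (g₂ : G ⧸ center G) = (h₂ : H ⧸ center H) →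
    (ψ ⟨⁅g₁, g₂⁆, commutator_mem_commutator (mem_top g₁) (mem_top g₂)⟩ : H) = ⁅h₁, h₂⁆

variable {φ : (G ⧸ center G) ≃* (H ⧸ center H)} {ψ : commutator G ≃* commutator H}

lemma IsIsoclinism.commute_iff (hφψ : IsIsoclinism φ ψ) {x g : G} {y h : H}
    (hx : φ x = y) (hg : φ g = h) : Commute x g ↔ Commute y h := by
  rw [← commutatorElement_eq_one_iff_commute, ← commutatorElement_eq_one_iff_commute,
    ← hφψ x g y h hx hg, OneMemClass.coe_eq_one, EmbeddingLike.map_eq_one_iff, ← Subtype.val_inj]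
  rfl

lemma IsIsoclinism.map_map_mk_centralizer (hφψ : IsIsoclinism φ ψ) {g : G} {h : H}
    (hg : φ g = h) :
    ((centralizer {g}).map (mk' (center G))).map φ.toMonoidHom =
      (centralizer {h}).map (mk' (center H)) := by
  ext q
  obtain ⟨y, rfl⟩ := mk_surjective q
  obtain ⟨x, hx⟩ := mk_surjective (φ.symm y)
  rw [mem_map_equiv, ← hx, ← commute_iff_mk_mem_map_centralizer,
    ← commute_iff_mk_mem_map_centralizer]
  exact hφψ.commute_iff (by rw [hx, MulEquiv.apply_symm_apply]) hg

lemma IsIsoclinism.zEquiv_iff (hφψ : IsIsoclinism φ ψ) {g₁ g₂ : G} {h₁ h₂ : H}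
    (hg₁ : φ g₁ = h₁) (hg₂ : φ g₂ = h₂) : zEquiv g₁ g₂ ↔ zEquiv h₁ h₂ := by
  have hker : φ.toMonoidHom.ker = ⊥ := (MonoidHom.ker_eq_bot_iff _).2 φ.injective
  rw [zEquiv_iff_isConjugate_map_mk, zEquiv_iff_isConjugate_map_mk,
    ← hφψ.map_map_mk_centralizer hg₁, ← hφψ.map_map_mk_centralizer hg₂,
    isConjugate_map_iff φ.toMonoidHom φ.surjective (hker ▸ bot_le) (hker ▸ bot_le)]

end Isoclinism

theorem card_zClasses_eq_of_isoclinic_general (G H : Type*) [Group G] [Group H]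
    (φ : (G ⧸ Subgroup.center G) ≃* (H ⧸ Subgroup.center H))
    (ψ : commutator G ≃* commutator H)
    (hcompat : ∀ (g₁ g₂ : G) (h₁ h₂ : H),
      φ (g₁ : G ⧸ Subgroup.center G) = (h₁ : H ⧸ Subgroup.center H) →
      φ (g₂ : G ⧸ Subgroup.center G) = (h₂ : H ⧸ Subgroup.center H) →
      (ψ ⟨⁅g₁, g₂⁆, Subgroup.commutator_mem_commutator (Subgroup.mem_top g₁)
        (Subgroup.mem_top g₂)⟩ : H) = ⁅h₁, h₂⁆) :
    Nat.card (zClasses G) = Nat.card (zClasses H) := by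
  have hφψ : IsIsoclinism φ ψ := hcompat
  let lift : G → H := fun g => (φ g).out
  have hlift (g : G) : φ g = (lift g : H ⧸ center H) := (out_eq' _).symm
  rw [card_zClasses_eq_card_quotient, card_zClasses_eq_card_quotient]
  refine Setoid.card_quotient_eq_of_rel_iff lift
    (fun a b => hφψ.zEquiv_iff (hlift a) (hlift b)) fun h => ?_
  obtain ⟨g, hg⟩ := mk_surjective (φ.symm h)
  exact ⟨g, zEquiv_of_mk_eq (by rw [← hlift, hg, MulEquiv.apply_symm_apply])⟩

/-- isoclinic finite groups have the same number of z-classes. -/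
theorem card_zClasses_eq_of_isoclinic (G H : Type*) [Group G] [Group H]
    [Finite G] [Finite H]
    (φ : (G ⧸ Subgroup.center G) ≃* (H ⧸ Subgroup.center H))
    (ψ : commutator G ≃* commutator H)
    (hcompat : ∀ (g₁ g₂ : G) (h₁ h₂ : H),
      φ (g₁ : G ⧸ Subgroup.center G) = (h₁ : H ⧸ Subgroup.center H) →
      φ (g₂ : G ⧸ Subgroup.center G) = (h₂ : H ⧸ Subgroup.center H) →
      (ψ ⟨⁅g₁, g₂⁆, Subgroup.commutator_mem_commutator (Subgroup.mem_top g₁)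
        (Subgroup.mem_top g₂)⟩ : H) = ⁅h₁, h₂⁆) :
    Nat.card (zClasses G) = Nat.card (zClasses H) :=
  card_zClasses_eq_of_isoclinic_general G H φ ψ hcompat
end

section
/- Let G be a group and let N be a maximal Abelian normal subgroup of G, i.e., N is a normal Abelian subgroup of G and no normal Abelian subgroup of G strictly contains N. Then N is a union of z-classes of G: if g ∈ N and g' ∈ G is z-equivalent to g in G, then g' ∈ N. -/
open scoped Matrix

/-- a maximal Abelian normal subgroup of a group is a union of
z-classes. -/
theorem maximal_abelian_normal_subgroup_union_of_zClasses (G : Type*) [Group G]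
    (N : Subgroup G) (hnormal : N.Normal) (habelian : ∀ x ∈ N, ∀ y ∈ N, x * y = y * x)
    (hmax : ∀ M : Subgroup G, M.Normal → (∀ x ∈ M, ∀ y ∈ M, x * y = y * x) →
      N ≤ M → N = M)
    (g : G) (hg : g ∈ N) (g' : G) (hzeq : zEquiv g g') : g' ∈ N := by
  classical
  set C : Subgroup G := Subgroup.centralizer (N : Set G) with hC
  -- C is normal
  have hCnormal : C.Normal := by
    constructor
    intro x hx t
    rw [Subgroup.mem_centralizer_iff] at hx ⊢
    intro n hn
    have hn' : t⁻¹ * n * t ∈ (N : Set G) := hnormal.conj_mem' n hn t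
    have := hx _ hn'
    -- (t⁻¹ n t) x = x (t⁻¹ n t)  ⇒  n (t x t⁻¹) = (t x t⁻¹) n
    have : n * (t * x * t⁻¹) = (t * x * t⁻¹) * n := by
      have h2 := congrArg (fun y => t * y * t⁻¹) this
      simpa [mul_assoc] using h2
    simpa [mul_assoc] using this
  -- Z(C) = centralizer(C) ⊓ C
  set M : Subgroup G := Subgroup.centralizer (C : Set G) ⊓ C with hM
  have hMnormal : M.Normal := by
    constructor
    intro x hx t
    obtain ⟨hx1, hx2⟩ := hx
    refine ⟨Subgroup.mem_centralizer_iff.mpr ?_, ?_⟩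
    · replace hx1 : x ∈ Subgroup.centralizer (C : Set G) := hx1
      rw [Subgroup.mem_centralizer_iff] at hx1
      intro c hc
      have hc' : t⁻¹ * c * t ∈ (C : Set G) := hCnormal.conj_mem' c hc t
      have := hx1 _ hc'
      have : c * (t * x * t⁻¹) = (t * x * t⁻¹) * c := by
        have h2 := congrArg (fun y => t * y * t⁻¹) this
        simpa [mul_assoc] using h2
      simpa [mul_assoc] using this
    · exact hCnormal.conj_mem x hx2 t
  have hMab : ∀ x ∈ M, ∀ y ∈ M, x * y = y * x := by
    intro x hx y hy
    exact (hx.1 y hy.2).symm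
  have hNle : N ≤ M := by
    intro n hn
    refine ⟨Subgroup.mem_centralizer_iff.mpr ?_, Subgroup.mem_centralizer_iff.mpr ?_⟩
    · intro c hc
      exact (Subgroup.mem_centralizer_iff.mp hc n hn).symm
    · intro m hm
      exact habelian m hm n hn
  have hNM : N = M := hmax M hMnormal hMab hNle
  -- C ≤ centralizer {g'}
  obtain ⟨t, ht⟩ := hzeq
  have hCle : C ≤ Subgroup.centralizer {g'} := by
    intro c hc
    rw [← ht]
    refine ⟨t⁻¹ * c * t, Subgroup.mem_centralizer_iff.mpr ?_, ?_⟩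
    · intro a ha
      rcases ha with rfl
      have : t⁻¹ * c * t ∈ C := hCnormal.conj_mem' c hc t
      rw [Subgroup.mem_centralizer_iff] at this
      exact (this a hg).symm ▸ (this a hg)
    · simp [mul_assoc]
  -- g' ∈ M
  have hg' : g' ∈ M := by
    refine ⟨Subgroup.mem_centralizer_iff.mpr ?_, Subgroup.mem_centralizer_iff.mpr ?_⟩
    · intro c hc
      have := hCle hc
      rw [Subgroup.mem_centralizer_iff] at this
      exact (this g' rfl).symm
    · intro n hn
      have hnC : n ∈ C := hNle hn |>.2
      have := hCle hnC
      rw [Subgroup.mem_centralizer_iff] at this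
      exact (this g' rfl).symm
  rw [hNM]
  exact hg'
end
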